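/- Let T₁, T₂ > 0 and let μ : ℝ × ℝ → ℝ be C¹ and nonnegative, with μ integrable on (−M,∞) × ℝ for every M > 0. Suppose β : ℝ² → ℝ is C³ and periodic with periods T₁, T₂ in x₁, x₂, and suppose that for every (x₁,x₂) ∈ ℝ², −(∂²_{x₁}β + ∂²_{x₂}β)(x₁,x₂) = 1 − ∫_{ℝ³} μ((v₁² + v₂²)/2 − β(x₁,x₂), v₃) dv₁dv₂dv₃. Then ∇β ≡ 0; i.e. β is constant, so the field E₀ = (−∂_{x₁}β, −∂_{x₂}β, 0) vanishes identically. -/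

import Mathlib

open MeasureTheory Real

/-- The Laplacian of `β : ℝ² → ℝ`, as the sum of second partial derivatives. -/
noncomputable def lap2 (β : EuclideanSpace ℝ (Fin 2) → ℝ) (x : EuclideanSpace ℝ (Fin 2)) : ℝ :=
  ∑ i : Fin 2, iteratedFDeriv ℝ 2 β x ![EuclideanSpace.single i 1, EuclideanSpace.single i 1]

/-!
A doubly periodic `β` attains its maximum and its minimum, where `Δβ ≤ 0` and `Δβ ≥ 0`
respectively. The Poisson equation reads `Δβ(x) = ρ(β(x)) - 1` with
`ρ(b) = ∫ μ(|v'|²/2 - b, v₃) dv`. Polar coordinates in `v' = (v₁, v₂)` followed by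
`u = |v'|²/2 - b` give `ρ(b) = 2π ∫_{u > -b} ∫ μ(u, v₃) dv₃ du`, which is nondecreasing in `b`
because `μ ≥ 0`. So `Δβ(x)` lies between its values at the minimum and at the maximum, hence
vanishes, and the bounded harmonic function `β` is constant by Liouville's theorem.
-/

open Filter Topology Set InnerProductSpace Laplacian Module
open scoped ENNReal

theorem Function.Periodic.of_mem_span_int {E α ι : Type*} [AddCommGroup E]
    {b : ι → E} {f : E → α} (hf : ∀ i, Function.Periodic f (b i)) {v : E}
    (hv : v ∈ Submodule.span ℤ (range b)) : Function.Periodic f v := by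
  induction hv using Submodule.span_induction with
  | mem v hv => obtain ⟨i, rfl⟩ := hv; exact hf i
  | zero => exact fun x => by simp
  | add u v _ _ hu hv => exact hu.add_period hv
  | smul n v _ hv => exact hv.zsmul n

section Periodic

variable {E ι : Type*} [NormedAddCommGroup E] [NormedSpace ℝ E] [FiniteDimensional ℝ E]
  [Fintype ι] (b : Basis ι ℝ E) {f : E → ℝ}

theorem Continuous.exists_forall_ge_of_periodic (hf : Continuous f)
    (hper : ∀ i, Function.Periodic f (b i)) : ∃ x₀, ∀ y, f y ≤ f x₀ := by
  have hK : IsCompact (closure (ZSpan.fundamentalDomain b)) :=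
    (ZSpan.fundamentalDomain_isBounded b).isCompact_closure
  obtain ⟨x₀, -, hx₀⟩ := hK.exists_isMaxOn
    ⟨_, subset_closure (ZSpan.fract_mem_fundamentalDomain b 0)⟩ hf.continuousOn
  refine ⟨x₀, fun y => ?_⟩
  have hfract : f (ZSpan.fract b y) = f y := by
    simpa [ZSpan.fract_apply] using
      (Function.Periodic.of_mem_span_int hper (ZSpan.floor b y).2 (ZSpan.fract b y)).symm
  exact hfract ▸ hx₀ (subset_closure (ZSpan.fract_mem_fundamentalDomain b y))

theorem Continuous.exists_forall_le_of_periodic (hf : Continuous f)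
    (hper : ∀ i, Function.Periodic f (b i)) : ∃ x₀, ∀ y, f x₀ ≤ f y := by
  simpa using hf.neg.exists_forall_ge_of_periodic b fun i x => congrArg Neg.neg (hper i x)

end Periodic

theorem IsLocalMax.deriv_deriv_nonpos {f : ℝ → ℝ} {a : ℝ} (h : IsLocalMax f a)
    (hc : ContinuousAt f a) : deriv (deriv f) a ≤ 0 := by
  by_contra! hpos
  -- the second derivative test turns `a` into a local minimum as well
  have hconst : f =ᶠ[𝓝 a] fun _ => f a :=
    (h.and (isLocalMin_of_deriv_deriv_pos hpos h.deriv_eq_zero hc)).mono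
      fun x hx => le_antisymm hx.1 hx.2
  have : deriv (deriv f) a = 0 := by
    rw [hconst.deriv.deriv_eq]
    simp
  exact hpos.ne' this

theorem IsLocalMax.iteratedFDeriv_two_nonpos {E : Type*} [NormedAddCommGroup E]
    [NormedSpace ℝ E] {f : E → ℝ} {a : E} (h : IsLocalMax f a) (hf : ContDiff ℝ 2 f) (v : E) :
    iteratedFDeriv ℝ 2 f a ![v, v] ≤ 0 := by
  set line : ℝ → E := fun t => a + t • v
  have hline : ∀ t, HasDerivAt line v t := fun t => by
    simpa [line] using ((hasDerivAt_id t).smul_const v).const_add a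
  have hline0 : line 0 = a := by simp [line]
  have hd1 : deriv (f ∘ line) = fun t => fderiv ℝ f (line t) v := funext fun t =>
    ((hf.differentiable two_ne_zero _).hasFDerivAt.comp_hasDerivAt t (hline t)).deriv
  have hd2 : HasDerivAt (fun t => fderiv ℝ f (line t) v) (fderiv ℝ (fderiv ℝ f) a v v) 0 := by
    have := ((hf.fderiv_right (m := 1) one_add_one_eq_two.le).differentiable one_ne_zero
      (line 0)).hasFDerivAt.comp_hasDerivAt 0 (hline 0)
    rw [hline0] at this
    exact (ContinuousLinearMap.apply ℝ ℝ v).hasFDerivAt.comp_hasDerivAt 0 this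
  have hmax : IsLocalMax (f ∘ line) 0 :=
    (hline0 ▸ h : IsLocalMax f (line 0)).comp_continuous (hline 0).continuousAt
  have := hmax.deriv_deriv_nonpos (hf.continuous.continuousAt.comp (hline 0).continuousAt)
  rw [hd1, hd2.deriv] at this
  simpa [iteratedFDeriv_two_apply] using this

section Laplacian

variable {E : Type*} [NormedAddCommGroup E] [InnerProductSpace ℝ E] [FiniteDimensional ℝ E]

theorem IsLocalMax.laplacian_nonpos {f : E → ℝ} {a : E} (h : IsLocalMax f a)
    (hf : ContDiff ℝ 2 f) : Δ f a ≤ 0 := by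
  rw [laplacian_eq_iteratedFDeriv_stdOrthonormalBasis]
  exact Finset.sum_nonpos fun i _ => h.iteratedFDeriv_two_nonpos hf _

theorem IsLocalMin.laplacian_nonneg {f : E → ℝ} {a : E} (h : IsLocalMin f a)
    (hf : ContDiff ℝ 2 f) : 0 ≤ Δ f a := by
  have := h.neg.laplacian_nonpos hf.neg
  rw [show (fun x => -f x) = -f from rfl, laplacian_neg] at this
  simpa using this

theorem laplacian_comp_linearIsometryEquiv {F G : Type*} [NormedAddCommGroup F]
    [InnerProductSpace ℝ F] [FiniteDimensional ℝ F] [NormedAddCommGroup G] [NormedSpace ℝ G]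
    (L : F ≃ₗᵢ[ℝ] E) (f : E → G) : Δ (f ∘ L) = Δ f ∘ L := by
  ext x
  let v := stdOrthonormalBasis ℝ F
  have hcomp : iteratedFDeriv ℝ 2 (f ∘ L) x =
      (iteratedFDeriv ℝ 2 f (L x)).compContinuousLinearMap fun _ => (L : F →L[ℝ] E) := by
    simpa [← iteratedFDerivWithin_univ] using
      L.toContinuousLinearEquiv.iteratedFDerivWithin_comp_right f uniqueDiffOn_univ
        (mem_univ (L x)) 2
  rw [laplacian_eq_iteratedFDeriv_orthonormalBasis _ v, Function.comp_apply,
    laplacian_eq_iteratedFDeriv_orthonormalBasis _ (v.map L)]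
  simp only [hcomp]
  congr 1 with i
  simp only [ContinuousMultilinearMap.compContinuousLinearMap_apply,
    LinearIsometryEquiv.coe_coe'', OrthonormalBasis.map_apply]
  congr 1 with j
  fin_cases j <;> rfl

theorem apply_eq_apply_of_laplacian_eq_zero_of_isBounded (hE : finrank ℝ E = 2)
    {F : Type*} [NormedAddCommGroup F] [NormedSpace ℝ F] {f : E → F} (hf : ContDiff ℝ 2 f)
    (hΔ : Δ f = 0) (hb : Bornology.IsBounded (range f)) (x y : E) : f x = f y := by
  let L : ℂ ≃ₗᵢ[ℝ] E :=
    Complex.isometryOfOrthonormal ((stdOrthonormalBasis ℝ E).reindex (finCongr hE))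
  have hharm : HarmonicOnNhd (f ∘ L) univ := fun z _ =>
    ⟨(hf.comp L.toContinuousLinearEquiv.contDiff).contDiffAt,
      .of_eq (by rw [laplacian_comp_linearIsometryEquiv, hΔ]; rfl)⟩
  have hb' : Bornology.IsBounded (range (f ∘ L)) := hb.subset (range_comp_subset_range _ _)
  simpa using bounded_harmonic_on_complex_plane_is_constant _ hharm hb' (L.symm x) (L.symm y)

theorem laplacian_eq_zero_of_eq_monotone_comp {f : E → ℝ} (hf : ContDiff ℝ 2 f) {ρ : ℝ → ℝ}
    (hρ : Monotone ρ) (hΔ : ∀ x, Δ f x = ρ (f x)) {xM xm : E} (hxM : ∀ y, f y ≤ f xM)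
    (hxm : ∀ y, f xm ≤ f y) : Δ f = 0 := by
  have hmax : IsLocalMax f xM := Eventually.of_forall hxM
  have hmin : IsLocalMin f xm := Eventually.of_forall hxm
  refine funext fun x => le_antisymm ?_ ?_
  · calc Δ f x = ρ (f x) := hΔ x
      _ ≤ ρ (f xM) := hρ (hxM x)
      _ = Δ f xM := (hΔ xM).symm
      _ ≤ 0 := hmax.laplacian_nonpos hf
  · calc 0 ≤ Δ f xm := hmin.laplacian_nonneg hf
      _ = ρ (f xm) := hΔ xm
      _ ≤ ρ (f x) := hρ (hxm x)
      _ = Δ f x := (hΔ x).symm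

end Laplacian

theorem lap2_eq_laplacian (β : EuclideanSpace ℝ (Fin 2) → ℝ) : lap2 β = Δ β := by
  ext x
  rw [laplacian_eq_iteratedFDeriv_orthonormalBasis _ (EuclideanSpace.basisFun (Fin 2) ℝ)]
  simp [lap2]

theorem image_sq_div_two_sub_Ioi (b : ℝ) : (fun r : ℝ => r ^ 2 / 2 - b) '' Ioi 0 = Ioi (-b) := by
  ext u
  constructor
  · rintro ⟨r, hr, rfl⟩
    simp only [mem_Ioi] at hr ⊢
    nlinarith
  · intro hu
    have h2u : 0 < 2 * (u + b) := by simp only [mem_Ioi] at hu; linarith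
    refine ⟨√(2 * (u + b)), Real.sqrt_pos.2 h2u, ?_⟩
    simp only [Real.sq_sqrt h2u.le]
    ring

theorem lintegral_Ioi_mul_comp_sq_div_two_sub {F : ℝ → ℝ≥0∞} (b : ℝ) :
    ∫⁻ r in Ioi 0, ENNReal.ofReal r * F (r ^ 2 / 2 - b) = ∫⁻ u in Ioi (-b), F u := by
  rw [← image_sq_div_two_sub_Ioi, lintegral_image_eq_lintegral_deriv_mul_of_monotoneOn
    measurableSet_Ioi (f' := id)]
  · rfl
  · intro r _
    simpa using (((hasDerivAt_pow 2 r).div_const 2).sub_const b).hasDerivWithinAt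
  · intro r hr s hs hrs
    simp only [mem_Ioi] at hr hs
    dsimp only
    gcongr

theorem lintegral_euclideanSpace_fin_two_comp_sq_norm {F : ℝ → ℝ≥0∞} (hF : Measurable F)
    (b : ℝ) :
    ∫⁻ w : EuclideanSpace ℝ (Fin 2), F (‖w‖ ^ 2 / 2 - b) =
      ENNReal.ofReal (2 * π) * ∫⁻ u in Ioi (-b), F u := by
  rw [← Complex.orthonormalBasisOneI.measurePreserving_repr.lintegral_comp_emb
    Complex.orthonormalBasisOneI.repr.toHomeomorph.measurableEmbedding]
  simp only [LinearIsometryEquiv.norm_map]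
  rw [← Complex.lintegral_comp_polarCoord_symm]
  simp only [Complex.norm_polarCoord_symm, sq_abs, smul_eq_mul]
  rw [polarCoord_target, Measure.volume_eq_prod, ← Measure.prod_restrict,
    lintegral_prod _ (by fun_prop)]
  simp only [setLIntegral_const, Real.volume_Ioo]
  rw [lintegral_mul_const _ (by fun_prop), lintegral_Ioi_mul_comp_sq_div_two_sub, mul_comm,
    sub_neg_eq_add, ← two_mul]

noncomputable def chargeDensity (μ : ℝ × ℝ → ℝ) (b : ℝ) : ℝ :=
  ∫ v : EuclideanSpace ℝ (Fin 2) × ℝ, μ (‖v.1‖ ^ 2 / 2 - b, v.2)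

theorem lintegral_chargeDensity_integrand_eq {μ : ℝ × ℝ → ℝ} (hμ : Measurable μ) (b : ℝ) :
    ∫⁻ v : EuclideanSpace ℝ (Fin 2) × ℝ, ENNReal.ofReal (μ (‖v.1‖ ^ 2 / 2 - b, v.2)) =
      ENNReal.ofReal (2 * π) * ∫⁻ p in Ioi (-b) ×ˢ univ, ENNReal.ofReal (μ p) := by
  rw [Measure.volume_eq_prod, lintegral_prod_symm _ (by fun_prop)]
  have hradial := fun y : ℝ => lintegral_euclideanSpace_fin_two_comp_sq_norm
    (F := fun u => ENNReal.ofReal (μ (u, y))) (by fun_prop) b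
  simp only [hradial]
  rw [lintegral_const_mul _ (by fun_prop), Measure.volume_eq_prod, ← Measure.prod_restrict,
    Measure.restrict_univ, lintegral_prod_symm _ (by fun_prop)]

theorem chargeDensity_mono {μ : ℝ × ℝ → ℝ} (hμ : Measurable μ) (hpos : ∀ p, 0 ≤ μ p)
    (hint : ∀ M : ℝ, 0 < M → IntegrableOn μ (Ioi (-M) ×ˢ (univ : Set ℝ))) :
    Monotone (chargeDensity μ) := by
  intro b b' hb
  have hrep : ∀ c, chargeDensity μ c = (∫⁻ v : EuclideanSpace ℝ (Fin 2) × ℝ,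
      ENNReal.ofReal (μ (‖v.1‖ ^ 2 / 2 - c, v.2))).toReal := fun c =>
    integral_eq_lintegral_of_nonneg_ae (.of_forall fun _ => hpos _)
      (hμ.comp (by fun_prop)).aestronglyMeasurable
  have hfin : ∫⁻ p in Ioi (-b') ×ˢ univ, ENNReal.ofReal (μ p) ≠ ⊤ := by
    have hM : 0 < |b'| + 1 := by positivity
    refine ((hint _ hM).mono_set (prod_mono (Ioi_subset_Ioi ?_) subset_rfl)).lintegral_lt_top.ne
    linarith [le_abs_self b']
  rw [hrep, hrep, lintegral_chargeDensity_integrand_eq hμ,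
    lintegral_chargeDensity_integrand_eq hμ]
  refine ENNReal.toReal_mono (ENNReal.mul_ne_top ENNReal.ofReal_ne_top hfin) ?_
  gcongr

/-- Non-existence of genuinely 3D planar BGK waves: if `μ : ℝ × ℝ → ℝ` is `C¹`, nonnegative,
integrable on `(−M,∞) × ℝ` for every `M > 0`, `β : ℝ² → ℝ` is `C³` and periodic with periods
`T₁, T₂`, and `−(∂²_{x₁}β + ∂²_{x₂}β)(x) = 1 − ∫_{ℝ³} μ((v₁²+v₂²)/2 − β(x), v₃) dv` for all
`x`, then `∇β ≡ 0`; here the velocity variable is `v = (v₁, v₂, v₃) ∈ ℝ² × ℝ`. -/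
theorem stmt_1 (T₁ T₂ : ℝ) (hT₁ : 0 < T₁) (hT₂ : 0 < T₂)
    (μ : ℝ × ℝ → ℝ) (hμreg : ContDiff ℝ 1 μ) (hμpos : ∀ p, 0 ≤ μ p)
    (hμint : ∀ M : ℝ, 0 < M → IntegrableOn μ (Set.Ioi (-M) ×ˢ (Set.univ : Set ℝ)))
    (β : EuclideanSpace ℝ (Fin 2) → ℝ) (hβ : ContDiff ℝ 3 β)
    (hper1 : ∀ x, β (x + T₁ • EuclideanSpace.single (0 : Fin 2) (1 : ℝ)) = β x)
    (hper2 : ∀ x, β (x + T₂ • EuclideanSpace.single (1 : Fin 2) (1 : ℝ)) = β x)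
    (hPoisson : ∀ x, -lap2 β x =
      1 - ∫ v : EuclideanSpace ℝ (Fin 2) × ℝ, μ (‖v.1‖ ^ 2 / 2 - β x, v.2)) :
    ∀ x, gradient β x = 0 := by
  obtain ⟨b, hb⟩ : ∃ b : Basis (Fin 2) ℝ (EuclideanSpace ℝ (Fin 2)),
      ∀ i, Function.Periodic β (b i) :=
    ⟨(EuclideanSpace.basisFun _ ℝ).toBasis.isUnitSMul (w := ![T₁, T₂])
      (by simp [Fin.forall_fin_two, hT₁.ne', hT₂.ne']),
      by simp [Fin.forall_fin_two, Basis.isUnitSMul_apply, hper1, hper2]⟩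
  obtain ⟨xM, hxM⟩ := hβ.continuous.exists_forall_ge_of_periodic b hb
  obtain ⟨xm, hxm⟩ := hβ.continuous.exists_forall_le_of_periodic b hb
  have hβ2 : ContDiff ℝ 2 β := hβ.of_le (by norm_num)
  have hΔ : ∀ x, Δ β x = chargeDensity μ (β x) - 1 := fun x => by
    rw [← lap2_eq_laplacian, chargeDensity]
    linarith [hPoisson x]
  have hρ : Monotone fun t => chargeDensity μ t - 1 := fun _ _ h =>
    sub_le_sub_right (chargeDensity_mono hμreg.continuous.measurable hμpos hμint h) 1
  have hharm : Δ β = 0 := laplacian_eq_zero_of_eq_monotone_comp hβ2 hρ hΔ hxM hxm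
  have hbdd : Bornology.IsBounded (range β) :=
    (Metric.isBounded_Icc (β xm) (β xM)).subset (range_subset_iff.2 fun x => ⟨hxm x, hxM x⟩)
  have hconst := apply_eq_apply_of_laplacian_eq_zero_of_isBounded finrank_euclideanSpace_fin
    hβ2 hharm hbdd
  intro x
  rw [show β = fun _ => β 0 from funext fun y => hconst y 0]
  exact gradient_fun_const x _
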